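/- Let f ∈ K[x] be nonzero with deg_X(f) ≤ d and let l(X) ∈ K[x][X] with coefficients of degree < n satisfy f = l(Q) (the Q-expansion of f). Let Q' ∈ Ψ_n with ε(Q) < ε(Q'), set h := Q − Q', and let a₀ denote the constant coefficient of the Q'-expansion of f. Then ν_{Q'}(l(h)) ≥ ν_{Q'}(f), and equality holds if and only if ν(a₀) = ν_{Q'}(f) = ν(l(h)). -/

import Mathlib

open Polynomial

noncomputable section

/-- A rank-one valuation on `K[x]`, modeled as a map to `ℝ ∪ {∞}`. -/
structure PolyVal (K : Type*) [Field K] where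
  ν : Polynomial K → WithTop ℝ
  ν_eq_top_iff : ∀ f : Polynomial K, ν f = ⊤ ↔ f = 0
  ν_mul : ∀ f g : Polynomial K, ν (f * g) = ν f + ν g
  ν_add : ∀ f g : Polynomial K, min (ν f) (ν g) ≤ ν (f + g)

namespace PolyVal

variable {K : Type*} [Field K]

/-- The real value of `ν f`, with junk value `0` when `f = 0`. -/
def vr (v : PolyVal K) (f : Polynomial K) : ℝ := WithTop.untopD 0 (v.ν f)

/-- `ε(f) = max{(ν(f) − ν(∂_b f))/b : 1 ≤ b ≤ deg f, ∂_b f ≠ 0}` (for nonconstant `f`). -/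
def eps (v : PolyVal K) (f : Polynomial K) : ℝ :=
  sSup {x : ℝ | ∃ b : ℕ, 1 ≤ b ∧ b ≤ f.natDegree ∧ hasseDeriv b f ≠ 0 ∧
    x = (v.vr f - v.vr (hasseDeriv b f)) / b}

/-- A key polynomial for `ν`: a monic polynomial `Q` such that every (nonconstant)
`f` with `ε(f) ≥ ε(Q)` satisfies `deg f ≥ deg Q`. -/
def IsKeyPol (v : PolyVal K) (Q : Polynomial K) : Prop :=
  Q.Monic ∧ 0 < Q.natDegree ∧
    ∀ f : Polynomial K, 0 < f.natDegree → v.eps Q ≤ v.eps f → Q.natDegree ≤ f.natDegree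

/-- `Ψ_n`: the set of key polynomials for `ν` of degree `n`. -/
def Psi (v : PolyVal K) (n : ℕ) : Set (Polynomial K) :=
  {Q | v.IsKeyPol Q ∧ Q.natDegree = n}

end PolyVal

variable {K : Type*} [Field K]

/-- The `i`-th coefficient of the `Q`-expansion of `f` (for monic `Q`). -/
def qCoeff (Q f : Polynomial K) (i : ℕ) : Polynomial K := (f /ₘ Q ^ i) %ₘ Q

namespace PolyVal

/-- The truncation `ν_Q(f) = min_{0 ≤ i ≤ r} ν(a_i Q^i)` along the `Q`-expansion of `f`. -/
def nuQ (v : PolyVal K) (Q f : Polynomial K) : WithTop ℝ :=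
  (Finset.range (f.natDegree / Q.natDegree + 1)).inf fun i => v.ν (qCoeff Q f i * Q ^ i)

/-- The real value of `ν_Q(f)`, with junk value `0` when `ν_Q(f) = ∞`. -/
def nuQr (v : PolyVal K) (Q f : Polynomial K) : ℝ := WithTop.untopD 0 (v.nuQ Q f)

/-- `f` is `Ψ_n`-stable: `ν_{Q'}(f) = ν(f)` for some `Q' ∈ Ψ_n`. -/
def Stable (v : PolyVal K) (n : ℕ) (f : Polynomial K) : Prop :=
  ∃ Q' ∈ v.Psi n, v.nuQ Q' f = v.ν f

/-- A limit key polynomial for `Ψ_n`: a monic non-stable polynomial of minimal degree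
among non-stable polynomials. -/
def IsLimitKeyPol (v : PolyVal K) (n : ℕ) (F : Polynomial K) : Prop :=
  F.Monic ∧ ¬ v.Stable n F ∧ ∀ g : Polynomial K, ¬ v.Stable n g → F.natDegree ≤ g.natDegree

end PolyVal

/-!
Every polynomial of degree `< n` has `ε ≤ ε(Q₀) =: E`. For `P ∈ Ψ_n` with `ε(P) > E`, the
`P`-expansion of a product of polynomials of degree `< n` has a constant term of the same value
as the product, and further terms gaining at least `ε(P) - E`: divide by `P` and compare the
`k`-th Hasse derivatives, `k` realizing `ε(P)`. Since `ν(h) = ν(Q)`, applying this to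
`l(h) = Σ lᵢ hⁱ` shows that the non-constant terms of its `Q'`-expansion exceed
`ν_Q(f) + ε(Q') - E`, whereas `ν_{Q'}(f) ≤ ν_Q(f) + deg_X(f) (ν(Q') - ν(Q))` is smaller by the
choice of `Q`. By Taylor's formula `f = l(Q' + h)` and `l(h)` have the same constant
`Q'`-coefficient, and everything reduces to the value of that coefficient.

To bound `ν(Q') - ν(Q)` by `B - ν(Q)`, `ν(Ψ_n)` must be bounded above; this follows from the
instability of `F`, by the same estimates applied to the Taylor expansion of `F = L(Q)` along
`P ∈ Ψ_n`.
-/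

theorem Polynomial.divByMonic_add {A : Type*} [CommRing A] {P : A[X]} (hP : P.Monic)
    (x y : A[X]) : (x + y) /ₘ P = x /ₘ P + y /ₘ P := by
  nontriviality A
  exact (div_modByMonic_unique _ (x %ₘ P + y %ₘ P) hP
    ⟨by linear_combination modByMonic_add_div x P + modByMonic_add_div y P,
      (degree_add_le _ _).trans_lt
        (max_lt (degree_modByMonic_lt _ hP) (degree_modByMonic_lt _ hP))⟩).1

theorem Polynomial.divByMonic_divByMonic {A : Type*} [CommRing A] {P S : A[X]} (hP : P.Monic)
    (hS : S.Monic) (x : A[X]) : x /ₘ P /ₘ S = x /ₘ (P * S) := by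
  nontriviality A
  refine ((div_modByMonic_unique _ (x %ₘ P + (x /ₘ P %ₘ S) * P) (hP.mul hS)
    ⟨by linear_combination modByMonic_add_div x P + P * modByMonic_add_div (x /ₘ P) S,
      (degree_add_le _ _).trans_lt (max_lt ?_ ?_)⟩).1).symm <;> rw [hS.degree_mul]
  · exact (degree_modByMonic_lt x hP).trans_le
      (le_add_of_nonneg_right (zero_le_degree_iff.2 hS.ne_zero))
  · rw [hP.degree_mul, add_comm]
    exact WithBot.add_lt_add_left (degree_eq_bot.not.2 hP.ne_zero) (degree_modByMonic_lt _ hS)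

section Expansion

variable {P : K[X]}

theorem qCoeff_zero (x : K[X]) : qCoeff P x 0 = x %ₘ P := by
  rw [qCoeff, pow_zero, divByMonic_one]

theorem qCoeff_succ (hP : P.Monic) (x : K[X]) (k : ℕ) :
    qCoeff P x (k + 1) = qCoeff P (x /ₘ P) k := by
  rw [qCoeff, qCoeff, pow_succ', divByMonic_divByMonic hP (hP.pow k)]

theorem qCoeff_add (hP : P.Monic) (x y : K[X]) (k : ℕ) :
    qCoeff P (x + y) k = qCoeff P x k + qCoeff P y k := by
  simp only [qCoeff, divByMonic_add (hP.pow k), add_modByMonic]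

theorem qCoeff_sum (hP : P.Monic) {ι : Type*} (s : Finset ι) (g : ι → K[X]) (k : ℕ) :
    qCoeff P (∑ i ∈ s, g i) k = ∑ i ∈ s, qCoeff P (g i) k :=
  map_sum (AddMonoidHom.mk' (qCoeff P · k) fun x y => qCoeff_add hP x y k) g s

theorem qCoeff_eq_zero_of_natDegree_lt (hP : P.Monic) {x : K[X]} {k : ℕ}
    (hx : x.natDegree < k * P.natDegree) : qCoeff P x k = 0 := by
  rw [qCoeff, (divByMonic_eq_zero_iff (hP.pow k)).2, zero_modByMonic]
  exact degree_lt_degree (hP.natDegree_pow k ▸ hx)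

theorem qCoeff_of_natDegree_lt (hP : P.Monic) {x : K[X]} (hx : x.natDegree < P.natDegree)
    (k : ℕ) : qCoeff P x k = if k = 0 then x else 0 := by
  split_ifs with hk
  · rw [hk, qCoeff_zero, (modByMonic_eq_self_iff hP).2 (degree_lt_degree hx)]
  · exact qCoeff_eq_zero_of_natDegree_lt hP (hx.trans_le (Nat.le_mul_of_pos_left _ (by omega)))

theorem natDegree_qCoeff_lt (hP : P.Monic) (hP0 : 0 < P.natDegree) (f : K[X]) (k : ℕ) :
    (qCoeff P f k).natDegree < P.natDegree :=
  natDegree_modByMonic_lt _ hP (by rintro rfl; simp at hP0)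

theorem qCoeff_mul_pow (hP : P.Monic) (x : K[X]) (j k : ℕ) :
    qCoeff P (x * P ^ j) k = if j ≤ k then qCoeff P x (k - j) else 0 := by
  induction j generalizing k with
  | zero => simp
  | succ j ih =>
    rw [pow_succ, ← mul_assoc]
    cases k with
    | zero =>
      rw [qCoeff_zero, (modByMonic_eq_zero_iff_dvd hP).2 (dvd_mul_left P _), if_neg (by omega)]
    | succ k =>
      rw [qCoeff_succ hP, mul_comm, mul_divByMonic_cancel_left _ hP, ih]
      simp

theorem qCoeff_eval (hP : P.Monic) {l : K[X][X]} (hl : ∀ i, (l.coeff i).natDegree < P.natDegree)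
    (t : ℕ) : qCoeff P (l.eval P) t = l.coeff t := by
  rw [eval_eq_sum_range, qCoeff_sum hP]
  simp_rw [qCoeff_mul_pow hP, qCoeff_of_natDegree_lt hP (hl _)]
  rw [Finset.sum_eq_single t (fun i _ hi => by split_ifs <;> first | rfl | omega)
    (fun ht => by rw [coeff_eq_zero_of_natDegree_lt (by simpa using ht)]; simp)]
  simp

theorem modByMonic_eval_eq (hP : P.Monic) (l : K[X][X]) (Q : K[X]) :
    l.eval Q %ₘ P = l.eval (Q - P) %ₘ P :=
  modByMonic_eq_of_dvd_sub hP (by simpa using sub_dvd_eval_sub Q (Q - P) l)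

def qTerm (P f : K[X]) (k : ℕ) : K[X] := qCoeff P f k * P ^ k

theorem qTerm_zero (x : K[X]) : qTerm P x 0 = x %ₘ P := by
  rw [qTerm, qCoeff_zero, pow_zero, mul_one]

theorem qTerm_sum (hP : P.Monic) {ι : Type*} (s : Finset ι) (g : ι → K[X]) (k : ℕ) :
    qTerm P (∑ i ∈ s, g i) k = ∑ i ∈ s, qTerm P (g i) k := by
  simp only [qTerm, qCoeff_sum hP, Finset.sum_mul]

theorem qTerm_mul_pow (hP : P.Monic) (x : K[X]) (j k : ℕ) :
    qTerm P (x * P ^ j) k = if j ≤ k then qTerm P x (k - j) * P ^ j else 0 := by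
  rw [qTerm, qCoeff_mul_pow hP]
  split_ifs with hjk
  · rw [qTerm, mul_assoc, ← pow_add, Nat.sub_add_cancel hjk]
  · rw [zero_mul]

theorem sum_qTerm (hP : P.Monic) (hP0 : 0 < P.natDegree) (x : K[X]) (N : ℕ)
    (hN : x.natDegree < (N + 1) * P.natDegree) :
    ∑ k ∈ Finset.range (N + 1), qTerm P x k = x := by
  induction N generalizing x with
  | zero =>
    rw [Finset.sum_range_one, qTerm_zero, (modByMonic_eq_self_iff hP).2
      (degree_lt_degree (by simpa using hN))]
  | succ N ih =>
    have hdiv : (x /ₘ P).natDegree < (N + 1) * P.natDegree := by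
      rw [natDegree_divByMonic x hP]
      have : (N + 1 + 1) * P.natDegree = (N + 1) * P.natDegree + P.natDegree := by ring
      have : P.natDegree ≤ (N + 1) * P.natDegree := Nat.le_mul_of_pos_left _ N.succ_pos
      omega
    have hshift : ∀ k, qTerm P x (k + 1) = P * qTerm P (x /ₘ P) k := fun k => by
      rw [qTerm, qTerm, qCoeff_succ hP, pow_succ']
      ring
    rw [Finset.sum_range_succ', qTerm_zero]
    simp_rw [hshift]
    rw [← Finset.mul_sum, ih _ hdiv]
    exact (add_comm _ _).trans (modByMonic_add_div x P)

theorem sum_range_qTerm (hP : P.Monic) (hP0 : 0 < P.natDegree) (f : K[X]) :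
    ∑ k ∈ Finset.range (f.natDegree / P.natDegree + 1), qTerm P f k = f :=
  sum_qTerm hP hP0 f _ ((Nat.div_lt_iff_lt_mul hP0).1 (Nat.lt_succ_self _))

end Expansion

namespace PolyVal

variable (v : PolyVal K) {P Q : K[X]} {E : ℝ}

theorem ν_zero : v.ν 0 = ⊤ := (v.ν_eq_top_iff 0).2 rfl

theorem ν_ne_top {f : K[X]} (hf : f ≠ 0) : v.ν f ≠ ⊤ := mt (v.ν_eq_top_iff f).1 hf

theorem ν_eq_coe_vr {f : K[X]} (hf : f ≠ 0) : v.ν f = v.vr f := by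
  obtain ⟨r, hr⟩ := WithTop.ne_top_iff_exists.1 (v.ν_ne_top hf)
  rw [vr, ← hr, WithTop.untopD_coe]

theorem ν_one : v.ν 1 = 0 := by
  have h := v.ν_mul 1 1
  rw [mul_one, v.ν_eq_coe_vr one_ne_zero, ← WithTop.coe_add, WithTop.coe_inj] at h
  rw [v.ν_eq_coe_vr one_ne_zero, WithTop.coe_eq_zero]
  linarith

def toAddValuation : AddValuation K[X] (WithTop ℝ) :=
  AddValuation.of v.ν v.ν_zero v.ν_one v.ν_add v.ν_mul

theorem ν_neg (f : K[X]) : v.ν (-f) = v.ν f := v.toAddValuation.map_neg f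

theorem min_le_ν_sub (f g : K[X]) : min (v.ν f) (v.ν g) ≤ v.ν (f - g) :=
  v.toAddValuation.map_sub f g

theorem ν_pow (f : K[X]) (k : ℕ) : v.ν (f ^ k) = k • v.ν f := v.toAddValuation.map_pow f k

theorem ν_pow_eq_coe {x : K[X]} (hx : x ≠ 0) (j : ℕ) :
    v.ν (x ^ j) = ((j * v.vr x : ℝ) : WithTop ℝ) := by
  rw [v.ν_pow, v.ν_eq_coe_vr hx, ← WithTop.coe_nsmul, nsmul_eq_mul]

theorem le_ν_sum {ι : Type*} {s : Finset ι} {f : ι → K[X]} {c : WithTop ℝ}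
    (h : ∀ i ∈ s, c ≤ v.ν (f i)) : c ≤ v.ν (∑ i ∈ s, f i) :=
  v.toAddValuation.map_le_sum h

theorem lt_ν_sum {ι : Type*} {s : Finset ι} {f : ι → K[X]} {c : WithTop ℝ} (hc : c ≠ ⊤)
    (h : ∀ i ∈ s, c < v.ν (f i)) : c < v.ν (∑ i ∈ s, f i) :=
  v.toAddValuation.map_lt_sum hc h

theorem ν_add_eq_of_lt {f g : K[X]} (h : v.ν f < v.ν g) : v.ν (f + g) = v.ν f :=
  v.toAddValuation.map_add_eq_of_lt_left h

theorem ν_eq_of_min_lt_ν_sub {f g : K[X]} (h : min (v.ν f) (v.ν g) < v.ν (f - g)) :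
    v.ν f = v.ν g := by
  rcases le_total (v.ν f) (v.ν g) with hfg | hgf
  · rw [min_eq_left hfg, ← v.ν_neg (f - g), neg_sub] at h
    exact (v.toAddValuation.map_eq_of_lt_sub h).symm
  · rw [min_eq_right hgf] at h
    exact v.toAddValuation.map_eq_of_lt_sub h

theorem ν_natCast_nonneg (m : ℕ) : 0 ≤ v.ν (m : K[X]) := by
  induction m with
  | zero => simp [v.ν_zero]
  | succ m ih =>
    rw [Nat.cast_succ]
    exact v.toAddValuation.map_le_add ih v.ν_one.ge

theorem ν_le_ν_natCast_mul (m : ℕ) (f : K[X]) : v.ν f ≤ v.ν (m * f) := by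
  rw [v.ν_mul]
  exact le_add_of_nonneg_left (v.ν_natCast_nonneg m)

theorem nuQ_le_ν_qTerm (hP : P.Monic) (hP0 : 0 < P.natDegree) (f : K[X]) (k : ℕ) :
    v.nuQ P f ≤ v.ν (qTerm P f k) := by
  rcases le_or_gt k (f.natDegree / P.natDegree) with hk | hk
  · exact Finset.inf_le (Finset.mem_range.2 (Nat.lt_succ_of_le hk))
  · rw [qTerm, qCoeff_eq_zero_of_natDegree_lt hP ((Nat.div_lt_iff_lt_mul hP0).1 hk), zero_mul,
      v.ν_zero]
    exact le_top

theorem le_nuQ {f : K[X]} {c : WithTop ℝ} (h : ∀ k, c ≤ v.ν (qTerm P f k)) : c ≤ v.nuQ P f :=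
  Finset.le_inf fun k _ => h k

theorem lt_nuQ {f : K[X]} {c : WithTop ℝ} (hc : c < ⊤) (h : ∀ k, c < v.ν (qTerm P f k)) :
    c < v.nuQ P f :=
  (Finset.lt_inf_iff hc).2 fun k _ => h k

theorem nuQ_le_ν (hP : P.Monic) (hP0 : 0 < P.natDegree) (f : K[X]) : v.nuQ P f ≤ v.ν f := by
  conv_rhs => rw [← sum_range_qTerm hP hP0 f]
  exact v.le_ν_sum fun k _ => v.nuQ_le_ν_qTerm hP hP0 f k

theorem nuQ_lt_top (hP : P.Monic) (hP0 : 0 < P.natDegree) {f : K[X]} (hf : f ≠ 0) :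
    v.nuQ P f < ⊤ :=
  (v.nuQ_le_ν hP hP0 f).trans_lt (WithTop.lt_top_iff_ne_top.2 (v.ν_ne_top hf))

theorem nuQ_eq_coe_nuQr (hP : P.Monic) (hP0 : 0 < P.natDegree) {f : K[X]} (hf : f ≠ 0) :
    v.nuQ P f = v.nuQr P f := by
  obtain ⟨r, hr⟩ := WithTop.ne_top_iff_exists.1 (v.nuQ_lt_top hP hP0 hf).ne
  rw [nuQr, ← hr, WithTop.untopD_coe]

theorem nuQ_eval_le (hP : P.Monic) (hP0 : 0 < P.natDegree) {l : K[X][X]}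
    (hl : ∀ i, (l.coeff i).natDegree < P.natDegree) (i : ℕ) :
    v.nuQ P (l.eval P) ≤ v.ν (l.coeff i * P ^ i) := by
  rw [← qCoeff_eval hP hl i]
  exact v.nuQ_le_ν_qTerm hP hP0 _ i

theorem nuQ_eq_and_ν_eq_of_lt (hP : P.Monic) (hP0 : 0 < P.natDegree) {f : K[X]}
    (h : ∀ k, 0 < k → v.ν (qTerm P f 0) < v.ν (qTerm P f k)) :
    v.nuQ P f = v.ν (qTerm P f 0) ∧ v.ν f = v.ν (qTerm P f 0) := by
  refine ⟨le_antisymm (v.nuQ_le_ν_qTerm hP hP0 f 0) (v.le_nuQ fun k => ?_), ?_⟩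
  · rcases k.eq_zero_or_pos with rfl | hk
    · exact le_rfl
    · exact (h k hk).le
  · have htop : v.ν (qTerm P f 0) ≠ ⊤ := (h 1 one_pos).ne_top
    conv_lhs => rw [← sum_range_qTerm hP hP0 f, Finset.sum_range_succ', add_comm]
    exact v.ν_add_eq_of_lt (v.lt_ν_sum htop fun k _ => h (k + 1) k.succ_pos)

/-- `ε(g) ≤ E`, in the form `ν(∂_b g) ≥ ν(g) - b E`, which also makes sense for constants. -/
def EpsBounded (E : ℝ) (g : K[X]) : Prop :=
  ∀ b : ℕ, v.ν g ≤ v.ν (hasseDeriv b g) + ((b * E : ℝ) : WithTop ℝ)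

def EpsBoundedOnDegreeLT (E : ℝ) (n : ℕ) : Prop :=
  ∀ g : K[X], g.natDegree < n → v.EpsBounded E g

/-- The set in the definition of `eps`, so that `v.eps g = sSup (v.epsSet g)` holds by `rfl`. -/
def epsSet (g : K[X]) : Set ℝ :=
  {x | ∃ b : ℕ, 1 ≤ b ∧ b ≤ g.natDegree ∧ hasseDeriv b g ≠ 0 ∧
    x = (v.vr g - v.vr (hasseDeriv b g)) / b}

theorem finite_epsSet (g : K[X]) : (v.epsSet g).Finite := by
  refine ((Finset.Icc 1 g.natDegree).finite_toSet.image
    fun b : ℕ => (v.vr g - v.vr (hasseDeriv b g)) / b).subset ?_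
  rintro x ⟨b, h1, h2, -, rfl⟩
  exact ⟨b, by simp [h1, h2], rfl⟩

theorem epsBounded_eps (g : K[X]) : v.EpsBounded (v.eps g) g := by
  intro b
  rcases b.eq_zero_or_pos with rfl | hb
  · simp
  by_cases hd : hasseDeriv b g = 0
  · simp [hd, v.ν_zero]
  have hbg : b ≤ g.natDegree := not_lt.1 fun h => hd (hasseDeriv_eq_zero_of_lt_natDegree g b h)
  have hg : g ≠ 0 := by
    rintro rfl
    simp at hd
  have h : _ ≤ v.eps g := le_csSup (v.finite_epsSet g).bddAbove ⟨b, hb, hbg, hd, rfl⟩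
  rw [div_le_iff₀ (by positivity)] at h
  rw [v.ν_eq_coe_vr hg, v.ν_eq_coe_vr hd, ← WithTop.coe_add, WithTop.coe_le_coe]
  linarith

theorem exists_vr_hasseDeriv_add_eq {g : K[X]} (hg : 0 < g.natDegree) :
    ∃ k, 1 ≤ k ∧ hasseDeriv k g ≠ 0 ∧ v.vr (hasseDeriv k g) + k * v.eps g = v.vr g := by
  have htop : hasseDeriv g.natDegree g ≠ 0 := by
    rw [hasseDeriv_natDegree_eq_C, Ne, C_eq_zero, leadingCoeff_eq_zero]
    rintro rfl
    simp at hg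
  have hne : (v.epsSet g).Nonempty := ⟨_, g.natDegree, hg, le_rfl, htop, rfl⟩
  obtain ⟨k, hk1, -, hd, hk⟩ := hne.csSup_mem (v.finite_epsSet g)
  refine ⟨k, hk1, hd, ?_⟩
  rw [show v.eps g = _ from hk]
  field_simp
  ring

theorem vr_le_natDegree_mul_eps (hP : P.Monic) : v.vr P ≤ P.natDegree * v.eps P := by
  have h := v.epsBounded_eps P P.natDegree
  rw [hasseDeriv_natDegree_eq_C, hP.leadingCoeff, C_1, v.ν_one, zero_add,
    v.ν_eq_coe_vr hP.ne_zero] at h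
  exact_mod_cast h

def TermsGe (P : K[X]) (c : WithTop ℝ) (σ : ℝ) (g : K[X]) : Prop :=
  c ≤ v.ν (qTerm P g 0) ∧ ∀ k, 0 < k → c + σ ≤ v.ν (qTerm P g k)

variable {v}

theorem EpsBounded.vr_le {g : K[X]} (h : v.EpsBounded E g) {b : ℕ}
    (hd : hasseDeriv b g ≠ 0) : v.vr g ≤ v.vr (hasseDeriv b g) + b * E := by
  have hg : g ≠ 0 := by
    rintro rfl
    simp at hd
  have := h b
  rwa [v.ν_eq_coe_vr hg, v.ν_eq_coe_vr hd, ← WithTop.coe_add, WithTop.coe_le_coe] at this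

theorem EpsBounded.mono {E' : ℝ} {g : K[X]} (h : v.EpsBounded E g) (hE : E ≤ E') :
    v.EpsBounded E' g := fun b =>
  (h b).trans (add_le_add le_rfl
    (WithTop.coe_le_coe.2 (mul_le_mul_of_nonneg_left hE b.cast_nonneg)))

theorem EpsBounded.mul {a b : K[X]} (ha : v.EpsBounded E a) (hb : v.EpsBounded E b) :
    v.EpsBounded E (a * b) := by
  intro k
  obtain ⟨ij, hij, hmin⟩ := Finset.exists_min_image (Finset.HasAntidiagonal.antidiagonal k)
    (fun ij => v.ν (hasseDeriv ij.1 a * hasseDeriv ij.2 b)) ⟨(0, k), by simp⟩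
  have hk : ((ij.1 : ℝ) * E + ij.2 * E) = k * E := by
    rw [← add_mul, ← Nat.cast_add, Finset.HasAntidiagonal.mem_antidiagonal.1 hij]
  rw [hasseDeriv_mul]
  calc v.ν (a * b) = v.ν a + v.ν b := v.ν_mul a b
    _ ≤ (v.ν (hasseDeriv ij.1 a) + ((ij.1 * E : ℝ) : WithTop ℝ)) +
        (v.ν (hasseDeriv ij.2 b) + ((ij.2 * E : ℝ) : WithTop ℝ)) := add_le_add (ha _) (hb _)
    _ = v.ν (hasseDeriv ij.1 a * hasseDeriv ij.2 b) + ((k * E : ℝ) : WithTop ℝ) := by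
        rw [v.ν_mul, add_add_add_comm, ← WithTop.coe_add, hk]
    _ ≤ _ := add_le_add (v.le_ν_sum hmin) le_rfl

theorem epsBounded_of_eps_le {g : K[X]} (h : 0 < g.natDegree → v.eps g ≤ E) :
    v.EpsBounded E g := by
  rcases g.natDegree.eq_zero_or_pos with hg | hg
  · intro b
    rcases b.eq_zero_or_pos with rfl | hb
    · simp
    · rw [hasseDeriv_eq_zero_of_lt_natDegree g b (by omega), v.ν_zero, top_add]
      exact le_top
  · exact (v.epsBounded_eps g).mono (h hg)

theorem IsKeyPol.epsBoundedOnDegreeLT (hQ : v.IsKeyPol Q) :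
    v.EpsBoundedOnDegreeLT (v.eps Q) Q.natDegree := fun g hg =>
  epsBounded_of_eps_le fun hg0 => le_of_lt <| lt_of_not_ge fun h => (hQ.2.2 g hg0 h).not_gt hg

theorem TermsGe.mono {c c' : WithTop ℝ} {σ σ' : ℝ} {g : K[X]} (h : v.TermsGe P c σ g)
    (hc : c' ≤ c) (hσ : σ' ≤ σ) : v.TermsGe P c' σ' g :=
  ⟨hc.trans h.1, fun k hk => (add_le_add hc (WithTop.coe_le_coe.2 hσ)).trans (h.2 k hk)⟩

theorem TermsGe.le_ν_qTerm {c : WithTop ℝ} {σ : ℝ} {g : K[X]} (h : v.TermsGe P c σ g)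
    (hσ : 0 ≤ σ) (k : ℕ) : c ≤ v.ν (qTerm P g k) := by
  rcases k.eq_zero_or_pos with rfl | hk
  · exact h.1
  · exact le_add_of_nonneg_right (WithTop.coe_nonneg.2 hσ) |>.trans (h.2 k hk)

theorem TermsGe.le_nuQ {c : WithTop ℝ} {σ : ℝ} {g : K[X]} (h : v.TermsGe P c σ g) (hσ : 0 ≤ σ) :
    c ≤ v.nuQ P g :=
  v.le_nuQ (h.le_ν_qTerm hσ)

theorem TermsGe.sum (hP : P.Monic) {c : WithTop ℝ} {σ : ℝ} {ι : Type*} {s : Finset ι}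
    {g : ι → K[X]} (h : ∀ i ∈ s, v.TermsGe P c σ (g i)) : v.TermsGe P c σ (∑ i ∈ s, g i) := by
  refine ⟨?_, fun k hk => ?_⟩ <;> rw [qTerm_sum hP]
  · exact v.le_ν_sum fun i hi => (h i hi).1
  · exact v.le_ν_sum fun i hi => (h i hi).2 k hk

theorem TermsGe.mul_pow (hP : P.Monic) {c C : WithTop ℝ} {σ : ℝ} {x : K[X]}
    (h : v.TermsGe P c σ x) {j : ℕ} (hC : C ≤ c + v.ν (P ^ j))
    (hCσ : 0 < j → C + σ ≤ c + v.ν (P ^ j)) : v.TermsGe P C σ (x * P ^ j) := by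
  refine ⟨?_, fun k hk => ?_⟩ <;> rw [qTerm_mul_pow hP]
  · split_ifs with hj
    · obtain rfl : j = 0 := by omega
      rw [v.ν_mul]
      exact hC.trans (add_le_add h.1 le_rfl)
    · rw [v.ν_zero]
      exact le_top
  · split_ifs with hj
    · rw [v.ν_mul]
      rcases eq_or_lt_of_le hj with rfl | hjk
      · rw [Nat.sub_self]
        exact (hCσ hk).trans (add_le_add h.1 le_rfl)
      · calc C + σ ≤ c + v.ν (P ^ j) + σ := add_le_add hC le_rfl
          _ = c + σ + v.ν (P ^ j) := add_right_comm _ _ _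
          _ ≤ _ := add_le_add (h.2 _ (Nat.sub_pos_of_lt hjk)) le_rfl
    · rw [v.ν_zero]
      exact le_top

theorem termsGe_of_natDegree_lt (hP : P.Monic) {g : K[X]} (hg : g.natDegree < P.natDegree)
    (σ : ℝ) : v.TermsGe P (v.ν g) σ g := by
  refine ⟨?_, fun k hk => ?_⟩ <;> rw [qTerm, qCoeff_of_natDegree_lt hP hg]
  · simp
  · rw [if_neg hk.ne', zero_mul, v.ν_zero]
    exact le_top

theorem add_le_ν_sum_hasseDeriv_mul (hEP : E < v.eps P) {s : K[X]} (hs : v.EpsBounded E s)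
    {k : ℕ} (hPk : v.vr (hasseDeriv k P) + k * v.eps P = v.vr P) :
    ((v.vr (hasseDeriv k P) + v.vr s + (v.eps P - E) : ℝ) : WithTop ℝ) ≤
      v.ν (∑ i ∈ Finset.range k, hasseDeriv i P * hasseDeriv (k - i) s) := by
  refine v.le_ν_sum fun i hi => ?_
  have hik : i < k := Finset.mem_range.1 hi
  by_cases h0 : hasseDeriv i P * hasseDeriv (k - i) s = 0
  · rw [h0, v.ν_zero]
    exact le_top
  obtain ⟨hi0, hj0⟩ := mul_ne_zero_iff.1 h0
  have h1 := (v.epsBounded_eps P).vr_le hi0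
  have h2 := hs.vr_le hj0
  have hgain : v.eps P - E ≤ ((k - i : ℕ) : ℝ) * (v.eps P - E) :=
    le_mul_of_one_le_left (sub_nonneg.2 hEP.le) (by exact_mod_cast Nat.sub_pos_of_lt hik)
  rw [Nat.cast_sub hik.le] at h2 hgain
  rw [v.ν_mul, v.ν_eq_coe_vr hi0, v.ν_eq_coe_vr hj0, ← WithTop.coe_add, WithTop.coe_le_coe]
  linarith

/-- Differentiate `k` times, `k` realizing `ε(P)`: in `∂_k (P s)` the Leibniz term `(∂_k P) s` is
smaller than all the others, so it is controlled by `∂_k (u + P s) - ∂_k u`. -/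
theorem ν_add_mul_eq_and_add_le (hP0 : 0 < P.natDegree) (hEP : E < v.eps P) {u s : K[X]}
    (hu : v.EpsBounded E u) (hs : v.EpsBounded E s) (hus : v.EpsBounded E (u + P * s)) :
    v.ν (u + P * s) = v.ν u ∧ v.ν u + ((v.eps P - E : ℝ) : WithTop ℝ) ≤ v.ν (P * s) := by
  rcases eq_or_ne s 0 with rfl | hs0
  · simp [v.ν_zero]
  have hP : P ≠ 0 := by
    rintro rfl
    simp at hP0
  obtain ⟨k, hk1, hdk, hPk⟩ := v.exists_vr_hasseDeriv_add_eq hP0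
  set T := ∑ i ∈ Finset.range k, hasseDeriv i P * hasseDeriv (k - i) s
  have hT := add_le_ν_sum_hasseDeriv_mul hEP hs hPk
  have hsplit : hasseDeriv k P * s = hasseDeriv k (u + P * s) - hasseDeriv k u - T := by
    rw [map_add, hasseDeriv_mul, Finset.Nat.sum_antidiagonal_eq_sum_range_succ
      (fun i j => hasseDeriv i P * hasseDeriv j s), Finset.sum_range_succ, Nat.sub_self,
      hasseDeriv_zero']
    ring
  have hmin : min (v.ν (hasseDeriv k (u + P * s))) (v.ν (hasseDeriv k u)) ≤
      ((v.vr (hasseDeriv k P) + v.vr s : ℝ) : WithTop ℝ) := by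
    have h := v.min_le_ν_sub (hasseDeriv k (u + P * s) - hasseDeriv k u) T
    rw [← hsplit, v.ν_mul, v.ν_eq_coe_vr hdk, v.ν_eq_coe_vr hs0, ← WithTop.coe_add] at h
    rcases min_le_iff.1 h with h | h
    · exact (v.min_le_ν_sub _ _).trans h
    · have := WithTop.coe_le_coe.1 (hT.trans h)
      linarith [sub_pos.2 hEP]
  have hmin' : min (v.ν (u + P * s)) (v.ν u) ≤
      ((v.vr (hasseDeriv k P) + v.vr s + k * E : ℝ) : WithTop ℝ) := by
    rw [WithTop.coe_add _ (k * E : ℝ)]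
    exact (min_le_min (hus k) (hu k)).trans
      ((min_add_add_right _ _ _).trans_le (add_le_add hmin le_rfl))
  have hPs : v.ν (P * s) = ((v.vr P + v.vr s : ℝ) : WithTop ℝ) := by
    rw [v.ν_mul, v.ν_eq_coe_vr hP, v.ν_eq_coe_vr hs0, WithTop.coe_add]
  have hgain : v.vr (hasseDeriv k P) + v.vr s + k * E + (v.eps P - E) ≤ v.vr P + v.vr s := by
    have hk1' : (1 : ℝ) ≤ k := by exact_mod_cast hk1
    nlinarith [mul_nonneg (sub_nonneg.2 hk1') (sub_pos.2 hEP).le]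
  have heq : v.ν (u + P * s) = v.ν u := by
    refine v.ν_eq_of_min_lt_ν_sub ?_
    rw [add_sub_cancel_left, hPs]
    exact hmin'.trans_lt (WithTop.coe_lt_coe.2 (by linarith [sub_pos.2 hEP]))
  refine ⟨heq, ?_⟩
  rw [heq, min_self] at hmin'
  rw [hPs]
  exact (add_le_add hmin' le_rfl).trans (by rw [← WithTop.coe_add]; exact_mod_cast hgain)

theorem termsGe_mul_of_natDegree_lt (hP : P.Monic) (hP0 : 0 < P.natDegree) (hEP : E < v.eps P)
    (hsmall : v.EpsBoundedOnDegreeLT E P.natDegree) {a c : K[X]}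
    (ha : a.natDegree < P.natDegree) (hc : c.natDegree < P.natDegree) :
    v.TermsGe P (v.ν (a * c)) (v.eps P - E) (a * c) := by
  have hdeg : (a * c).natDegree < 2 * P.natDegree := natDegree_mul_le.trans_lt (by omega)
  have hu := natDegree_qCoeff_lt hP hP0 (a * c) 0
  rw [qCoeff_zero] at hu
  have hs : (a * c /ₘ P).natDegree < P.natDegree := by
    rw [natDegree_divByMonic _ hP]
    omega
  have hcarry := ν_add_mul_eq_and_add_le hP0 hEP (hsmall _ hu) (hsmall _ hs)
    (by rw [modByMonic_add_div]; exact (hsmall a ha).mul (hsmall c hc))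
  rw [modByMonic_add_div] at hcarry
  refine ⟨by rw [qTerm_zero, hcarry.1], fun k hk => ?_⟩
  rcases (show k = 1 ∨ 2 ≤ k by omega) with rfl | hk2
  · rw [qTerm, qCoeff_succ hP, qCoeff_of_natDegree_lt hP hs, if_pos rfl, pow_one,
      mul_comm (a * c /ₘ P), hcarry.1]
    exact hcarry.2
  · rw [qTerm, qCoeff_eq_zero_of_natDegree_lt hP (hdeg.trans_le (Nat.mul_le_mul_right _ hk2)),
      zero_mul, v.ν_zero]
    exact le_top

theorem TermsGe.mul_of_natDegree_lt (hP : P.Monic) (hP0 : 0 < P.natDegree) (hEP : E < v.eps P)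
    (hsmall : v.EpsBoundedOnDegreeLT E P.natDegree) {g c : K[X]}
    (hg : v.TermsGe P (v.ν g) (v.eps P - E) g) (hc : c.natDegree < P.natDegree) :
    v.TermsGe P (v.ν (g * c)) (v.eps P - E) (g * c) := by
  have hσ : 0 ≤ v.eps P - E := sub_nonneg.2 hEP.le
  have hexp : g * c = ∑ k ∈ Finset.range (g.natDegree / P.natDegree + 1),
      qCoeff P g k * c * P ^ k := by
    conv_lhs => rw [← sum_range_qTerm hP hP0 g]
    rw [Finset.sum_mul]
    exact Finset.sum_congr rfl fun k _ => by rw [qTerm]; ring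
  suffices ∀ k, v.TermsGe P (v.ν (g * c)) (v.eps P - E) (qCoeff P g k * c * P ^ k) by
    have key := TermsGe.sum hP (s := Finset.range (g.natDegree / P.natDegree + 1)) fun k _ => this k
    rwa [← hexp] at key
  intro k
  have hak : v.ν (qCoeff P g k * c) + v.ν (P ^ k) = v.ν (qTerm P g k) + v.ν c := by
    rw [qTerm, v.ν_mul, v.ν_mul, add_right_comm]
  refine (termsGe_mul_of_natDegree_lt hP hP0 hEP hsmall (natDegree_qCoeff_lt hP hP0 g k)
    hc).mul_pow hP ?_ fun hk => ?_ <;> rw [hak, v.ν_mul]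
  · exact add_le_add (hg.le_ν_qTerm hσ k) le_rfl
  · rw [add_right_comm]
    exact add_le_add (hg.2 k hk) le_rfl

theorem termsGe_mul_pow (hP : P.Monic) (hP0 : 0 < P.natDegree) (hEP : E < v.eps P)
    (hsmall : v.EpsBoundedOnDegreeLT E P.natDegree) {a b : K[X]}
    (ha : a.natDegree < P.natDegree) (hb : b.natDegree < P.natDegree) (i : ℕ) :
    v.TermsGe P (v.ν (a * b ^ i)) (v.eps P - E) (a * b ^ i) := by
  induction i with
  | zero => simpa using termsGe_of_natDegree_lt hP ha _
  | succ i ih =>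
    rw [pow_succ, ← mul_assoc]
    exact ih.mul_of_natDegree_lt hP hP0 hEP hsmall hb

theorem termsGe_eval (hP : P.Monic) (hP0 : 0 < P.natDegree) (hEP : E < v.eps P)
    (hsmall : v.EpsBoundedOnDegreeLT E P.natDegree) {l : K[X][X]}
    (hl : ∀ i, (l.coeff i).natDegree < P.natDegree) {h : K[X]} (hh : h.natDegree < P.natDegree)
    {c : WithTop ℝ} (hc : ∀ i, c ≤ v.ν (l.coeff i * h ^ i)) :
    v.TermsGe P c (v.eps P - E) (l.eval h) := by
  rw [eval_eq_sum_range]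
  exact TermsGe.sum hP fun i _ =>
    (termsGe_mul_pow hP hP0 hEP hsmall (hl i) hh i).mono (hc i) le_rfl

/-- Differentiating `P = Q - (Q - P)` `k` times, `k` realizing `ε(P)`, shows
`ν(P) > min(ν(Q), ν(Q - P))`. -/
theorem ν_sub_eq_and_lt (hQ : v.IsKeyPol Q) (hP : P.Monic) (hdeg : P.natDegree = Q.natDegree)
    (hQP : v.eps Q < v.eps P) : v.ν (Q - P) = v.ν Q ∧ v.ν Q < v.ν P := by
  have hP0 : 0 < P.natDegree := hdeg ▸ hQ.2.1
  have hdh : (Q - P).natDegree < Q.natDegree :=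
    IsMonicOfDegree.natDegree_sub_lt hQ.2.1.ne' ⟨rfl, hQ.1⟩ ⟨hdeg, hP⟩
  obtain ⟨k, hk1, hdk, hPk⟩ := v.exists_vr_hasseDeriv_add_eq hP0
  have hkε : ((k * v.eps Q : ℝ) : WithTop ℝ) < ((k * v.eps P : ℝ) : WithTop ℝ) :=
    WithTop.coe_lt_coe.2 (mul_lt_mul_of_pos_left hQP (by exact_mod_cast hk1))
  have hmin : min (v.ν Q) (v.ν (Q - P)) < v.ν (Q - (Q - P)) := by
    rw [sub_sub_cancel, v.ν_eq_coe_vr hP.ne_zero, ← hPk, WithTop.coe_add, ← v.ν_eq_coe_vr hdk]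
    calc min (v.ν Q) (v.ν (Q - P))
        ≤ min (v.ν (hasseDeriv k Q) + ((k * v.eps Q : ℝ) : WithTop ℝ))
          (v.ν (hasseDeriv k (Q - P)) + ((k * v.eps Q : ℝ) : WithTop ℝ)) :=
          min_le_min (v.epsBounded_eps Q k) (hQ.epsBoundedOnDegreeLT _ hdh k)
      _ = min (v.ν (hasseDeriv k Q)) (v.ν (hasseDeriv k (Q - P))) +
          ((k * v.eps Q : ℝ) : WithTop ℝ) := min_add_add_right _ _ _
      _ ≤ v.ν (hasseDeriv k P) + ((k * v.eps Q : ℝ) : WithTop ℝ) := by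
          refine add_le_add ?_ le_rfl
          simpa using v.min_le_ν_sub (hasseDeriv k Q) (hasseDeriv k (Q - P))
      _ < _ := WithTop.add_lt_add_left (v.ν_ne_top hdk) hkε
  have heq := v.ν_eq_of_min_lt_ν_sub hmin
  rw [← heq, min_self, sub_sub_cancel] at hmin
  exact ⟨heq.symm, hmin⟩

theorem termsGe_mul_sub_pow (hQ : Q.Monic) (hQ0 : 0 < Q.natDegree) (hEQ : E < v.eps Q)
    (hsmall : v.EpsBoundedOnDegreeLT E Q.natDegree) {a h : K[X]}
    (ha : a.natDegree < Q.natDegree) (hh : h.natDegree < Q.natDegree) (hνh : v.ν h = v.ν Q)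
    (k : ℕ) : v.TermsGe Q (v.ν (a * Q ^ k)) 0 (a * (Q - h) ^ k) := by
  have hexp : a * (Q - h) ^ k =
      ∑ t ∈ Finset.range (k + 1), a * (k.choose t : K[X]) * (-h) ^ t * Q ^ (k - t) := by
    rw [sub_eq_neg_add, add_pow, Finset.mul_sum]
    exact Finset.sum_congr rfl fun t _ => by ring
  rw [hexp]
  refine TermsGe.sum hQ fun t ht => ?_
  have ht : t ≤ k := Nat.lt_succ_iff.1 (Finset.mem_range.1 ht)
  have hac : (a * (k.choose t : K[X])).natDegree < Q.natDegree :=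
    natDegree_mul_le.trans_lt (by simpa using ha)
  have hbound : v.ν (a * Q ^ k) ≤ v.ν (a * (k.choose t : K[X]) * (-h) ^ t) + v.ν (Q ^ (k - t)) := by
    rw [v.ν_mul, v.ν_mul, v.ν_mul, v.ν_pow, v.ν_pow, v.ν_pow, v.ν_neg, hνh, add_assoc, add_assoc,
      ← add_nsmul, Nat.add_sub_cancel' ht]
    exact add_le_add le_rfl (le_add_of_nonneg_left (v.ν_natCast_nonneg _))
  refine ((termsGe_mul_pow hQ hQ0 hEQ hsmall hac (by rwa [natDegree_neg]) t).mono le_rfl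
    (sub_nonneg.2 hEQ.le)).mul_pow hQ hbound fun _ => ?_
  simpa using hbound

theorem nuQ_le_nuQ_add (hQ : Q.Monic) (hQ0 : 0 < Q.natDegree) (hEQ : E < v.eps Q)
    (hsmall : v.EpsBoundedOnDegreeLT E Q.natDegree) {Q' : K[X]}
    (hQ' : Q'.Monic) (hdeg : Q'.natDegree = Q.natDegree) (hdh : (Q - Q').natDegree < Q.natDegree)
    (hνh : v.ν (Q - Q') = v.ν Q) (hQQ' : v.vr Q ≤ v.vr Q') (f : K[X]) :
    v.nuQ Q' f ≤ v.nuQ Q f +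
      (((f.natDegree / Q.natDegree : ℕ) * (v.vr Q' - v.vr Q) : ℝ) : WithTop ℝ) := by
  set N := f.natDegree / Q.natDegree
  obtain ⟨k, hk, hmin⟩ := Finset.exists_min_image (Finset.range (N + 1))
    (fun k => v.ν (qCoeff Q' f k * Q ^ k)) ⟨0, by simp⟩
  have hf : v.TermsGe Q (v.ν (qCoeff Q' f k * Q ^ k)) 0 f := by
    have key := TermsGe.sum hQ (s := Finset.range (N + 1)) fun j hj =>
      (termsGe_mul_sub_pow hQ hQ0 hEQ hsmall (hdeg ▸ natDegree_qCoeff_lt hQ' (hdeg ▸ hQ0) f j)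
        hdh hνh j).mono (hmin j hj) le_rfl
    have hsum := sum_range_qTerm hQ' (hdeg ▸ hQ0) f
    simp only [sub_sub_cancel] at key
    simp only [qTerm, hdeg] at hsum
    rwa [hsum] at key
  have hk' : (k : ℝ) ≤ N := by exact_mod_cast Nat.lt_succ_iff.1 (Finset.mem_range.1 hk)
  calc v.nuQ Q' f ≤ v.ν (qTerm Q' f k) := v.nuQ_le_ν_qTerm hQ' (hdeg ▸ hQ0) f k
    _ = v.ν (qCoeff Q' f k * Q ^ k) + ((k * (v.vr Q' - v.vr Q) : ℝ) : WithTop ℝ) := by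
      rw [qTerm, v.ν_mul, v.ν_mul, v.ν_pow_eq_coe hQ'.ne_zero, v.ν_pow_eq_coe hQ.ne_zero, add_assoc,
        ← WithTop.coe_add]
      ring_nf
    _ ≤ v.nuQ Q f + ((N * (v.vr Q' - v.vr Q) : ℝ) : WithTop ℝ) :=
      add_le_add (hf.le_nuQ le_rfl) (WithTop.coe_le_coe.2
        (mul_le_mul_of_nonneg_right hk' (sub_nonneg.2 hQQ')))

/-- Expanding `L(Q)` in `P` through the Taylor expansion `L(Q) = Σ_j (∂_j L)(Q - P) P^j`. -/
theorem termsGe_eval_of_sub (hP : P.Monic) (hP0 : 0 < P.natDegree) (hEP : E < v.eps P)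
    (hsmall : v.EpsBoundedOnDegreeLT E P.natDegree) {L : K[X][X]}
    (hL : ∀ i, (L.coeff i).natDegree < P.natDegree) (hQ0 : Q ≠ 0)
    (hdh : (Q - P).natDegree < P.natDegree) (hνh : v.ν (Q - P) = v.ν Q)
    (hQP : v.vr Q ≤ v.vr P) {m : ℝ} (hm : ∀ i, (m : WithTop ℝ) ≤ v.ν (L.coeff i * Q ^ i)) :
    v.TermsGe P ((m + min (v.vr P - v.vr Q) (v.eps P - E) - (v.eps P - E) : ℝ) : WithTop ℝ)
      (v.eps P - E) (L.eval Q) := by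
  have htaylor : L.eval Q = ∑ j ∈ Finset.range ((taylor (Q - P) L).natDegree + 1),
      (hasseDeriv j L).eval (Q - P) * P ^ j := by
    rw [← add_sub_cancel P Q, ← taylor_eval, eval_eq_sum_range, add_sub_cancel]
    simp_rw [taylor_coeff]
  rw [htaylor]
  refine TermsGe.sum hP fun j _ => ?_
  have hLj : ∀ i, ((hasseDeriv j L).coeff i).natDegree < P.natDegree := fun i => by
    rw [hasseDeriv_coeff]
    exact natDegree_mul_le.trans_lt (by simpa using hL (i + j))
  have hB := termsGe_eval hP hP0 hEP hsmall hLj hdh (c := ((m - j * v.vr Q : ℝ) : WithTop ℝ))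
    fun i => by
      rw [hasseDeriv_coeff, mul_assoc]
      refine le_trans ?_ (v.ν_le_ν_natCast_mul _ _)
      by_cases hL0 : L.coeff (i + j) = 0
      · rw [hL0, zero_mul, v.ν_zero]
        exact le_top
      have hmij := hm (i + j)
      rw [v.ν_mul, v.ν_pow_eq_coe hQ0, v.ν_eq_coe_vr hL0, ← WithTop.coe_add,
        WithTop.coe_le_coe] at hmij
      rw [v.ν_mul, v.ν_pow, hνh, ← v.ν_pow, v.ν_pow_eq_coe hQ0, v.ν_eq_coe_vr hL0,
        ← WithTop.coe_add, WithTop.coe_le_coe]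
      push_cast at hmij
      linarith
  have hμ₁ := min_le_left (v.vr P - v.vr Q) (v.eps P - E)
  have hμ₂ := min_le_right (v.vr P - v.vr Q) (v.eps P - E)
  refine hB.mul_pow hP ?_ fun hj => ?_ <;> rw [v.ν_pow_eq_coe hP.ne_zero] <;> norm_cast
  · nlinarith [(j.cast_nonneg : (0 : ℝ) ≤ j)]
  · have hj' : (1 : ℝ) ≤ j := by exact_mod_cast hj
    nlinarith

theorem le_nuQ_of_nuQ_ne (hP : P.Monic) (hP0 : 0 < P.natDegree) {F : K[X]} {C : WithTop ℝ}
    (h : ∀ k, 0 < k → C ≤ v.ν (qTerm P F k)) (hF : v.nuQ P F ≠ v.ν F) : C ≤ v.nuQ P F := by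
  have h0 : C ≤ v.ν (qTerm P F 0) := by
    by_contra hlt
    obtain ⟨h1, h2⟩ := v.nuQ_eq_and_ν_eq_of_lt hP hP0 fun k hk => (not_le.1 hlt).trans_le (h k hk)
    exact hF (h1.trans h2.symm)
  refine v.le_nuQ fun k => ?_
  rcases k.eq_zero_or_pos with rfl | hk
  · exact h0
  · exact h k hk

theorem vr_sub_vr_le_of_nuQ_ne (hQ : v.IsKeyPol Q) (hP : P.Monic)
    (hdeg : P.natDegree = Q.natDegree) (hQP : v.eps Q < v.eps P) (hEP : E < v.eps P)
    (hsmall : v.EpsBoundedOnDegreeLT E P.natDegree) {L : K[X][X]}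
    (hL : ∀ i, (L.coeff i).natDegree < P.natDegree) {m b : ℝ}
    (hm : ∀ i, (m : WithTop ℝ) ≤ v.ν (L.coeff i * Q ^ i))
    (hst : v.nuQ P (L.eval Q) ≠ v.ν (L.eval Q)) (hb : v.nuQ P (L.eval Q) ≤ b)
    (hgap : b - m < v.eps P - E) : v.vr P - v.vr Q ≤ b - m := by
  obtain ⟨hνh, hlt⟩ := ν_sub_eq_and_lt hQ hP hdeg hQP
  have hP0 : 0 < P.natDegree := hdeg ▸ hQ.2.1
  have hdh : (Q - P).natDegree < P.natDegree :=
    hdeg ▸ IsMonicOfDegree.natDegree_sub_lt hQ.2.1.ne' ⟨rfl, hQ.1⟩ ⟨hdeg, hP⟩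
  have hQP' : v.vr Q ≤ v.vr P := by
    rw [v.ν_eq_coe_vr hQ.1.ne_zero, v.ν_eq_coe_vr hP.ne_zero, WithTop.coe_lt_coe] at hlt
    exact hlt.le
  have hterms := termsGe_eval_of_sub hP hP0 hEP hsmall hL hQ.1.ne_zero hdh hνh hQP' hm
  have hμ := le_nuQ_of_nuQ_ne hP hP0 (fun k hk => by simpa using hterms.2 k hk) hst
  have hμb := WithTop.coe_le_coe.1 (hμ.trans hb)
  rcases le_total (v.vr P - v.vr Q) (v.eps P - E) with h | h
  · rw [min_eq_left h] at hμb
    linarith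
  · rw [min_eq_right h] at hμb
    linarith

theorem nuQ_le_sSup {n : ℕ} {F : K[X]} (hF : F ≠ 0) {P : K[X]} (hP : P ∈ v.Psi n) :
    v.nuQ P F ≤ ((sSup {x : ℝ | ∃ Q' ∈ v.Psi n, v.nuQ Q' F = x} : ℝ) : WithTop ℝ) := by
  have hbdd : BddAbove {x : ℝ | ∃ Q' ∈ v.Psi n, v.nuQ Q' F = x} := by
    refine ⟨v.vr F, ?_⟩
    rintro x ⟨P, hP, hx⟩
    rw [← WithTop.coe_le_coe, ← hx, ← v.ν_eq_coe_vr hF]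
    exact v.nuQ_le_ν hP.1.1 hP.1.2.1 F
  rw [v.nuQ_eq_coe_nuQr hP.1.1 hP.1.2.1 hF, WithTop.coe_le_coe]
  exact le_csSup hbdd ⟨P, hP, v.nuQ_eq_coe_nuQr hP.1.1 hP.1.2.1 hF⟩

theorem bddAbove_ν_Psi {n : ℕ} (hsmall : v.EpsBoundedOnDegreeLT E n) (hQ : Q ∈ v.Psi n)
    (hEQ : E < v.eps Q) {L : K[X][X]} (hL : ∀ i, (L.coeff i).natDegree < n)
    (hF0 : L.eval Q ≠ 0) (hst : ¬ v.Stable n (L.eval Q)) {b : ℝ}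
    (hb : ∀ P ∈ v.Psi n, v.nuQ P (L.eval Q) ≤ b) (hgap : b - v.nuQr Q (L.eval Q) < v.eps Q - E) :
    BddAbove {x : ℝ | ∃ P ∈ v.Psi n, v.ν P = x} := by
  have hQ0 : 0 < Q.natDegree := hQ.1.2.1
  have hm : ∀ i, (v.nuQr Q (L.eval Q) : WithTop ℝ) ≤ v.ν (L.coeff i * Q ^ i) := fun i => by
    rw [← v.nuQ_eq_coe_nuQr hQ.1.1 hQ0 hF0]
    exact v.nuQ_eval_le hQ.1.1 hQ0 (hQ.2 ▸ hL) i
  refine ⟨max (n * v.eps Q) (v.vr Q + (b - v.nuQr Q (L.eval Q))), ?_⟩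
  rintro x ⟨P, hP, hx⟩
  rw [v.ν_eq_coe_vr hP.1.1.ne_zero, WithTop.coe_inj] at hx
  subst hx
  rcases le_or_gt (v.eps P) (v.eps Q) with hPQ | hQP
  · refine le_max_of_le_left ((v.vr_le_natDegree_mul_eps hP.1.1).trans ?_)
    rw [hP.2]
    exact mul_le_mul_of_nonneg_left hPQ n.cast_nonneg
  · refine le_max_of_le_right ?_
    have := vr_sub_vr_le_of_nuQ_ne hQ.1 hP.1.1 (hP.2.trans hQ.2.symm) hQP (hEQ.trans hQP)
      (hP.2 ▸ hsmall) (hP.2 ▸ hL) hm (fun h => hst ⟨P, hP, h⟩) (hb P hP) (by linarith)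
    linarith

theorem nuQ_le_nuQ_and_eq_iff (hP : P.Monic) (hP0 : 0 < P.natDegree) {f W : K[X]}
    (h0 : W %ₘ P = f %ₘ P) (hpos : ∀ k, 0 < k → v.nuQ P f < v.ν (qTerm P W k)) :
    v.nuQ P f ≤ v.nuQ P W ∧
      (v.nuQ P W = v.nuQ P f ↔ v.ν (qCoeff P f 0) = v.nuQ P f ∧ v.nuQ P f = v.ν W) := by
  have hW0 : v.ν (qTerm P W 0) = v.ν (qCoeff P f 0) := by rw [qTerm_zero, h0, qCoeff_zero]
  have hf0 : v.nuQ P f ≤ v.ν (qCoeff P f 0) := by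
    simpa [qTerm] using v.nuQ_le_ν_qTerm hP hP0 f 0
  have hle : v.nuQ P f ≤ v.nuQ P W := by
    refine v.le_nuQ fun k => ?_
    rcases k.eq_zero_or_pos with rfl | hk
    · exact hW0 ▸ hf0
    · exact (hpos k hk).le
  refine ⟨hle, fun heq => ?_, fun ⟨h1, _⟩ => ?_⟩
  · have ha0 : v.ν (qCoeff P f 0) = v.nuQ P f := by
      refine le_antisymm (not_lt.1 fun hlt => ?_) hf0
      have hlt' : v.nuQ P f < v.nuQ P W := by
        refine v.lt_nuQ ((hpos 1 one_pos).trans_le le_top) fun k => ?_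
        rcases k.eq_zero_or_pos with rfl | hk
        · exact hW0 ▸ hlt
        · exact hpos k hk
      exact hlt'.ne heq.symm
    refine ⟨ha0, ?_⟩
    rw [(v.nuQ_eq_and_ν_eq_of_lt hP hP0 fun k hk => hW0 ▸ ha0 ▸ hpos k hk).2, hW0, ha0]
  · exact le_antisymm ((v.nuQ_le_ν_qTerm hP hP0 W 0).trans (hW0.trans h1).le) hle

theorem nuQ_le_nuQ_eval_sub (hQ : Q.Monic) (hQ0 : 0 < Q.natDegree)
    (hsmall : v.EpsBoundedOnDegreeLT E Q.natDegree) {Q' : K[X]}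
    (hQ' : Q'.Monic) (hdeg : Q'.natDegree = Q.natDegree) (hEQ : E < v.eps Q)
    (hQQ' : v.eps Q < v.eps Q') (hνh : v.ν (Q - Q') = v.ν Q) (hle : v.vr Q ≤ v.vr Q')
    {l : K[X][X]} (hl : ∀ i, (l.coeff i).natDegree < Q.natDegree) {f : K[X]} (hf : f ≠ 0)
    (hlf : f = l.eval Q)
    (hgap : ((f.natDegree / Q.natDegree : ℕ) : ℝ) * (v.vr Q' - v.vr Q) < v.eps Q' - E) :
    v.nuQ Q' f ≤ v.nuQ Q' (l.eval (Q - Q')) ∧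
      (v.nuQ Q' (l.eval (Q - Q')) = v.nuQ Q' f ↔
        v.ν (qCoeff Q' f 0) = v.nuQ Q' f ∧ v.nuQ Q' f = v.ν (l.eval (Q - Q'))) := by
  have hQ'0 : 0 < Q'.natDegree := hdeg ▸ hQ0
  have hdh : (Q - Q').natDegree < Q.natDegree :=
    IsMonicOfDegree.natDegree_sub_lt hQ0.ne' ⟨rfl, hQ⟩ ⟨hdeg, hQ'⟩
  have hW : v.TermsGe Q' (v.nuQ Q f) (v.eps Q' - E) (l.eval (Q - Q')) :=
    termsGe_eval hQ' hQ'0 (hEQ.trans hQQ') (hdeg ▸ hsmall) (hdeg ▸ hl) (hdeg ▸ hdh) fun i => by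
      rw [v.ν_mul, v.ν_pow, hνh, ← v.ν_pow, ← v.ν_mul, hlf]
      exact v.nuQ_eval_le hQ hQ0 hl i
  have hcomp := nuQ_le_nuQ_add hQ hQ0 hEQ hsmall hQ' hdeg hdh hνh hle f
  refine nuQ_le_nuQ_and_eq_iff hQ' hQ'0 (by rw [hlf, modByMonic_eval_eq hQ' l Q]) fun k hk => ?_
  refine hcomp.trans_lt (lt_of_lt_of_le ?_ (hW.2 k hk))
  rw [v.nuQ_eq_coe_nuQr hQ hQ0 hf, ← WithTop.coe_add, ← WithTop.coe_add, WithTop.coe_lt_coe]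
  linarith

end PolyVal

theorem stmt_5_general
    (v : PolyVal K) (n : ℕ) (hn : 0 < n)
    -- a fixed limit key polynomial `F` for `Ψ_n`, `d = deg_X F`
    (F : Polynomial K) (hF : v.IsLimitKeyPol n F)
    (d : ℕ)
    -- `B = sup ν(Ψ_n)` and `B̄ = sup {ν_{Q'}(F)}`
    (B Bbar : ℝ)
    (hB : B = sSup {x : ℝ | ∃ Q' ∈ v.Psi n, v.ν Q' = (x : WithTop ℝ)})
    (hBbar : Bbar = sSup {x : ℝ | ∃ Q' ∈ v.Psi n, v.nuQ Q' F = (x : WithTop ℝ)})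
    -- the fixed key polynomials `Q₀` and `Q`
    (Q₀ Q : Polynomial K) (hQ₀ : Q₀ ∈ v.Psi n) (hQmem : Q ∈ v.Psi n)
    (hQgap1 : v.eps Q - v.eps Q₀ > d * (B - v.vr Q))
    (hQgap2 : v.eps Q - v.eps Q₀ > Bbar - v.nuQr Q F)
    -- `F = L(Q)` is the `Q`-expansion of `F`
    (L : Polynomial (Polynomial K)) (hLcoeff : ∀ i : ℕ, (L.coeff i).natDegree < n)
    (hLF : F = eval Q L)
    (f : Polynomial K) (hf : f ≠ 0) (hdf : f.natDegree / n ≤ d)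
    (l : Polynomial (Polynomial K)) (hlc : ∀ i : ℕ, (l.coeff i).natDegree < n)
    (hlf : f = eval Q l)
    (Q' : Polynomial K) (hQ' : Q' ∈ v.Psi n) (hQQ' : v.eps Q < v.eps Q') :
    v.nuQ Q' f ≤ v.nuQ Q' (eval (Q - Q') l) ∧
    (v.nuQ Q' (eval (Q - Q') l) = v.nuQ Q' f ↔
      (v.ν (qCoeff Q' f 0) = v.nuQ Q' f ∧ v.nuQ Q' f = v.ν (eval (Q - Q') l))) := by
  have hQn := hQmem.2
  subst hQn
  have hQm := hQmem.1.1
  have hsmall := hQ₀.2 ▸ hQ₀.1.epsBoundedOnDegreeLT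
  have hF0 : F ≠ 0 := hF.1.ne_zero
  have hbar : ∀ P ∈ v.Psi Q.natDegree, v.nuQ P F ≤ Bbar := fun P hP => hBbar ▸ v.nuQ_le_sSup hF0 hP
  have hEQ : v.eps Q₀ < v.eps Q := by
    have := hbar Q hQmem
    rw [v.nuQ_eq_coe_nuQr hQm hn hF0, WithTop.coe_le_coe] at this
    linarith
  -- `sSup` of a set that is not bounded above is `0`, so `B` needs this bound
  have hB_bdd := PolyVal.bddAbove_ν_Psi hsmall hQmem hEQ hLcoeff (hLF ▸ hF0) (hLF ▸ hF.2.1)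
    (hLF ▸ hbar) (by rw [← hLF]; linarith)
  obtain ⟨hνh, hlt⟩ := PolyVal.ν_sub_eq_and_lt hQmem.1 hQ'.1.1 hQ'.2 hQQ'
  rw [v.ν_eq_coe_vr hQm.ne_zero, v.ν_eq_coe_vr hQ'.1.1.ne_zero, WithTop.coe_lt_coe] at hlt
  have hQ'B : v.vr Q' ≤ B := hB ▸ le_csSup hB_bdd ⟨Q', hQ', v.ν_eq_coe_vr hQ'.1.1.ne_zero⟩
  refine PolyVal.nuQ_le_nuQ_eval_sub hQm hn hsmall hQ'.1.1 hQ'.2 hEQ hQQ' hνh hlt.le hlc hf hlf ?_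
  calc ((f.natDegree / Q.natDegree : ℕ) : ℝ) * (v.vr Q' - v.vr Q)
      ≤ d * (B - v.vr Q) := mul_le_mul (by exact_mod_cast hdf) (by linarith) (by linarith)
        d.cast_nonneg
    _ < v.eps Q' - v.eps Q₀ := by linarith

/-- Proposition `spivdevemostrarpamim`: for `f = l(Q)` with `deg_X f ≤ d` and
`Q' ∈ Ψ_n` with `ε(Q) < ε(Q')`, setting `h = Q − Q'`, one has `ν_{Q'}(l(h)) ≥ ν_{Q'}(f)`,
with equality iff `ν(a₀) = ν_{Q'}(f) = ν(l(h))`, where `a₀` is the constant coefficient of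
the `Q'`-expansion of `f`. -/
theorem stmt_5
    (v : PolyVal K) (n : ℕ) (hn : 0 < n)
    -- `Ψ_n` is nonempty, bounded, and `ν(Ψ_n)` has no maximum
    (hne : (v.Psi n).Nonempty)
    (hbd : ∃ a : Polynomial K, ∀ Q' ∈ v.Psi n, v.ν Q' < v.ν a)
    (hnomax : ∀ Q' ∈ v.Psi n, ∃ Q'' ∈ v.Psi n, v.ν Q' < v.ν Q'')
    -- a fixed limit key polynomial `F` for `Ψ_n`, `d = deg_X F`
    (F : Polynomial K) (hF : v.IsLimitKeyPol n F)
    (d : ℕ) (hd : d = F.natDegree / n)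
    -- `B = sup ν(Ψ_n)` and `B̄ = sup {ν_{Q'}(F)}`
    (B Bbar : ℝ)
    (hB : B = sSup {x : ℝ | ∃ Q' ∈ v.Psi n, v.ν Q' = (x : WithTop ℝ)})
    (hBbar : Bbar = sSup {x : ℝ | ∃ Q' ∈ v.Psi n, v.nuQ Q' F = (x : WithTop ℝ)})
    -- the fixed key polynomials `Q₀` and `Q`
    (Q₀ Q : Polynomial K) (hQ₀ : Q₀ ∈ v.Psi n) (hQmem : Q ∈ v.Psi n)
    (hQgap1 : v.eps Q - v.eps Q₀ > d * (B - v.vr Q))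
    (hQgap2 : v.eps Q - v.eps Q₀ > Bbar - v.nuQr Q F)
    -- `F = L(Q)` is the `Q`-expansion of `F`
    (L : Polynomial (Polynomial K)) (hLcoeff : ∀ i : ℕ, (L.coeff i).natDegree < n)
    (hLF : F = eval Q L)
    (f : Polynomial K) (hf : f ≠ 0) (hdf : f.natDegree / n ≤ d)
    (l : Polynomial (Polynomial K)) (hlc : ∀ i : ℕ, (l.coeff i).natDegree < n)
    (hlf : f = eval Q l)
    (Q' : Polynomial K) (hQ' : Q' ∈ v.Psi n) (hQQ' : v.eps Q < v.eps Q') :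
    v.nuQ Q' f ≤ v.nuQ Q' (eval (Q - Q') l) ∧
    (v.nuQ Q' (eval (Q - Q') l) = v.nuQ Q' f ↔
      (v.ν (qCoeff Q' f 0) = v.nuQ Q' f ∧ v.nuQ Q' f = v.ν (eval (Q - Q') l))) :=
  stmt_5_general v n hn F hF d B Bbar hB hBbar Q₀ Q hQ₀ hQmem hQgap1 hQgap2 L hLcoeff hLF f hf hdf l
    hlc hlf Q' hQ' hQQ'
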